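/- Let Ψ be a quasi-hyperbolic continuous linear cocycle over a compact base 𝐁. If dim E^s is constant on all minimal sets of the base flow, then Ψ is hyperbolic on all of 𝐄. -/

import Mathlib

open Filter Topology

/-- A continuous linear cocycle (`ℝ`-action by bundle isomorphisms on the
trivial vector bundle `B × E`) over a continuous flow on `B`. -/
structure LinearCocycle (B E : Type*) [TopologicalSpace B]
    [NormedAddCommGroup E] [NormedSpace ℝ E] where
  flow : ℝ → B → B
  flow_cont : Continuous fun p : ℝ × B => flow p.1 p.2
  flow_zero : ∀ b, flow 0 b = b
  flow_add : ∀ s t b, flow s (flow t b) = flow (s + t) b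
  P : ℝ → B → E →L[ℝ] E
  P_cont : Continuous fun p : ℝ × B => P p.1 p.2
  P_zero : ∀ b, P 0 b = ContinuousLinearMap.id ℝ E
  P_comp : ∀ s t b, (P s (flow t b)).comp (P t b) = P (s + t) b

variable {B E : Type*} [TopologicalSpace B]
  [NormedAddCommGroup E] [NormedSpace ℝ E]

/-- Quasi-hyperbolicity: every nonzero vector has unbounded orbit. -/
def LinearCocycle.IsQuasiHyperbolic (Φ : LinearCocycle B E) : Prop :=
  ∀ b : B, ∀ v : E, v ≠ 0 → ∀ C : ℝ, ∃ t : ℝ, C < ‖Φ.P t b v‖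

/-- The subspace of vectors with bounded forward orbit. -/
def LinearCocycle.stable (Φ : LinearCocycle B E) (b : B) : Submodule ℝ E where
  carrier := {v | ∃ C : ℝ, ∀ t > (0:ℝ), ‖Φ.P t b v‖ ≤ C}
  add_mem' := by
    rintro u v ⟨C₁, h₁⟩ ⟨C₂, h₂⟩
    exact ⟨C₁ + C₂, fun t ht => by
      simpa [map_add] using (norm_add_le (Φ.P t b u) (Φ.P t b v)).trans
        (add_le_add (h₁ t ht) (h₂ t ht))⟩
  zero_mem' := ⟨0, fun t ht => by simp⟩
  smul_mem' := by
    rintro c v ⟨C, h⟩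
    exact ⟨‖c‖ * C, fun t ht => by
      rw [map_smul, norm_smul]
      exact mul_le_mul_of_nonneg_left (h t ht) (norm_nonneg c)⟩

/-- The subspace of vectors with bounded backward orbit. -/
def LinearCocycle.unstable (Φ : LinearCocycle B E) (b : B) : Submodule ℝ E where
  carrier := {v | ∃ C : ℝ, ∀ t > (0:ℝ), ‖Φ.P (-t) b v‖ ≤ C}
  add_mem' := by
    rintro u v ⟨C₁, h₁⟩ ⟨C₂, h₂⟩
    exact ⟨C₁ + C₂, fun t ht => by
      simpa [map_add] using (norm_add_le (Φ.P (-t) b u) (Φ.P (-t) b v)).trans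
        (add_le_add (h₁ t ht) (h₂ t ht))⟩
  zero_mem' := ⟨0, fun t ht => by simp⟩
  smul_mem' := by
    rintro c v ⟨C, h⟩
    exact ⟨‖c‖ * C, fun t ht => by
      rw [map_smul, norm_smul]
      exact mul_le_mul_of_nonneg_left (h t ht) (norm_nonneg c)⟩

/-- Uniform hyperbolicity of a linear cocycle over an invariant subset `Λ`. -/
def LinearCocycle.IsHyperbolicOn (Φ : LinearCocycle B E) (Λ : Set B) : Prop :=
  ∃ Es Eu : B → Submodule ℝ E,
    (∀ t : ℝ, ∀ b ∈ Λ, (Es b).map (Φ.P t b : E →ₗ[ℝ] E) = Es (Φ.flow t b)) ∧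
    (∀ t : ℝ, ∀ b ∈ Λ, (Eu b).map (Φ.P t b : E →ₗ[ℝ] E) = Eu (Φ.flow t b)) ∧
    (∀ b ∈ Λ, IsCompl (Es b) (Eu b)) ∧
    ∃ T > (0:ℝ), ∀ b ∈ Λ,
      (∀ v ∈ Es b, v ≠ 0 → ‖Φ.P T b v‖ < (1/2) * ‖v‖) ∧
      (∀ v ∈ Eu b, v ≠ 0 → ‖Φ.P (-T) b v‖ < (1/2) * ‖v‖)

/-- A minimal set of the base flow: a nonempty closed invariant set with no
proper nonempty closed invariant subset. -/
def LinearCocycle.IsMinimalSet (Φ : LinearCocycle B E) (S : Set B) : Prop :=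
  S.Nonempty ∧ IsClosed S ∧ (∀ t : ℝ, ∀ x ∈ S, Φ.flow t x ∈ S) ∧
    ∀ S' ⊆ S, S'.Nonempty → IsClosed S' →
      (∀ t : ℝ, ∀ x ∈ S', Φ.flow t x ∈ S') → S' = S

/-!
Quasi-hyperbolicity becomes uniform through one compactness argument: if vectors at base
points `bᵢ` had orbits bounded, relative to their size, on longer and longer time windows,
a limit over the compact base of the normalised vectors would be a nonzero vector with
bounded orbit. Applied three times, it shows that orbits have no large bumps, that stable
vectors decay, and (combining the two) that stable vectors contract uniformly; reversing
time gives the same for unstable vectors.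

The dimension count uses ω-limit sets. Push a complement `W` of `Eˢ(b)` along the orbit of
`b`: it is eventually expanded, so its images have backward orbits bounded in terms of
their size, and a limit of these images at an ω-limit point `y` of `b` is a subspace of
`Eᵘ(y)` of dimension `dim W`. Choosing `y` in a minimal set, where `dim Eˢ(y) = k` and
`Eˢ(y) ∩ Eᵘ(y) = 0`, gives `dim Eˢ(b) ≥ k`; reversing time gives `dim Eᵘ(b) ≥ n - k`.
-/
open Filter Topology Module Set

section SubspaceLimit

variable {ι : Type*}

lemma isCompact_setOf_orthonormal {F : Type*} [NormedAddCommGroup F] [InnerProductSpace ℝ F]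
    [FiniteDimensional ℝ F] [Fintype ι] : IsCompact {f : ι → F | Orthonormal ℝ f} := by
  classical
  refine (isCompact_univ_pi fun _ => isCompact_closedBall (0 : F) 1).of_isClosed_subset ?_
    fun f hf i _ => by simp [hf.1 i]
  have : {f : ι → F | Orthonormal ℝ f} =
      ⋂ i, ⋂ j, {f | inner ℝ (f i) (f j) = if i = j then (1 : ℝ) else 0} := by
    ext f
    simp [orthonormal_iff_ite]
  rw [this]
  exact isClosed_iInter fun i => isClosed_iInter fun j =>
    isClosed_eq (by fun_prop) continuous_const

variable [FiniteDimensional ℝ E]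

lemma exists_finrank_eq_forall_exists_tendsto (U : Ultrafilter ι) (V : ι → Submodule ℝ E)
    {r : ℕ} (hV : ∀ i, finrank ℝ (V i) = r) :
    ∃ L : Submodule ℝ E, finrank ℝ L = r ∧
      ∀ u ∈ L, ∃ g : ι → E, (∀ i, g i ∈ V i) ∧ Tendsto g U (𝓝 u) := by
  let e := toEuclidean (E := E)
  have hframe : ∀ i, ∃ f : Fin r → EuclideanSpace ℝ (Fin (finrank ℝ E)),
      Orthonormal ℝ f ∧ ∀ j, e.symm (f j) ∈ V i := by
    intro i
    let Z := (V i).map (e.toLinearEquiv : E →ₗ[ℝ] EuclideanSpace ℝ (Fin (finrank ℝ E)))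
    have hZ : finrank ℝ Z = r := (e.toLinearEquiv.finrank_map_eq (V i)).trans (hV i)
    let bZ := (stdOrthonormalBasis ℝ Z).reindex (finCongr hZ)
    refine ⟨fun j => bZ j, bZ.orthonormal.comp_linearIsometry Z.subtypeₗᵢ, fun j => ?_⟩
    obtain ⟨v, hv, hve⟩ := Submodule.mem_map.1 (bZ j).2
    show e.symm (bZ j) ∈ V i
    rw [← hve]
    simpa using hv
  choose f hfo hfV using hframe
  obtain ⟨fl, hflo, hfl⟩ := isCompact_setOf_orthonormal.ultrafilter_le_nhds' (U.map f)
    (Ultrafilter.mem_map.2 (Eventually.of_forall hfo))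
  let gl : Fin r → E := fun j => e.symm (fl j)
  have hgl : LinearIndependent ℝ gl :=
    hflo.linearIndependent.map' _ e.symm.toLinearEquiv.ker
  refine ⟨Submodule.span ℝ (range gl), by rw [finrank_span_eq_card hgl, Fintype.card_fin],
    fun u hu => ?_⟩
  obtain ⟨a, rfl⟩ := (Submodule.mem_span_range_iff_exists_fun ℝ).1 hu
  refine ⟨fun i => ∑ j, a j • e.symm (f i j),
    fun i => Submodule.sum_mem _ fun j _ => Submodule.smul_mem _ _ (hfV i j), ?_⟩
  have hcont : Continuous fun F : Fin r → EuclideanSpace ℝ (Fin (finrank ℝ E)) =>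
      ∑ j, a j • e.symm (F j) := by fun_prop
  exact (hcont.tendsto fl).comp hfl

end SubspaceLimit

namespace LinearCocycle

variable (Φ : LinearCocycle B E)

lemma mem_stable {b : B} {v : E} :
    v ∈ Φ.stable b ↔ ∃ C : ℝ, ∀ t > (0:ℝ), ‖Φ.P t b v‖ ≤ C := Iff.rfl

lemma mem_unstable {b : B} {v : E} :
    v ∈ Φ.unstable b ↔ ∃ C : ℝ, ∀ t > (0:ℝ), ‖Φ.P (-t) b v‖ ≤ C := Iff.rfl

lemma P_zero_apply (b : B) (v : E) : Φ.P 0 b v = v := by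
  rw [Φ.P_zero]; rfl

lemma P_P_apply (s t : ℝ) (b : B) (v : E) :
    Φ.P s (Φ.flow t b) (Φ.P t b v) = Φ.P (s + t) b v := by
  rw [← Φ.P_comp]; rfl

lemma flow_neg_flow (t : ℝ) (b : B) : Φ.flow (-t) (Φ.flow t b) = b := by
  rw [Φ.flow_add, neg_add_cancel, Φ.flow_zero]

lemma P_neg_P_apply (t : ℝ) (b : B) (v : E) : Φ.P (-t) (Φ.flow t b) (Φ.P t b v) = v := by
  rw [P_P_apply, neg_add_cancel, P_zero_apply]

lemma P_P_neg_apply (t : ℝ) (b : B) (v : E) : Φ.P t b (Φ.P (-t) (Φ.flow t b) v) = v := by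
  have h := Φ.P_P_apply t (-t) (Φ.flow t b) v
  rwa [flow_neg_flow, add_neg_cancel, P_zero_apply] at h

noncomputable def equivP (t : ℝ) (b : B) : E ≃ₗ[ℝ] E :=
  .ofLinearMap (Φ.P t b) (Φ.P (-t) (Φ.flow t b)) (LinearMap.ext (Φ.P_P_neg_apply t b))
    (LinearMap.ext (Φ.P_neg_P_apply t b))

lemma continuous_P_apply_time (b : B) (v : E) : Continuous fun t => Φ.P t b v :=
  (Φ.P_cont.comp (continuous_id.prodMk continuous_const)).clm_apply continuous_const

lemma continuous_P_apply (t : ℝ) : Continuous fun p : B × E => Φ.P t p.1 p.2 :=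
  (Φ.P_cont.comp (continuous_const.prodMk continuous_fst)).clm_apply continuous_snd

def baseFlow : Flow ℝ B where
  toFun := Φ.flow
  cont' := Φ.flow_cont
  map_add' s t b := (Φ.flow_add s t b).symm
  map_zero' := Φ.flow_zero

def reverse : LinearCocycle B E where
  flow t := Φ.flow (-t)
  flow_cont := Φ.flow_cont.comp (continuous_fst.neg.prodMk continuous_snd)
  flow_zero := by simpa using Φ.flow_zero
  flow_add s t b := by rw [Φ.flow_add, neg_add]
  P t := Φ.P (-t)
  P_cont := Φ.P_cont.comp (continuous_fst.neg.prodMk continuous_snd)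
  P_zero := by simpa using Φ.P_zero
  P_comp s t b := by rw [Φ.P_comp, neg_add]

@[simp] lemma reverse_P (t : ℝ) (b : B) : Φ.reverse.P t b = Φ.P (-t) b := rfl

@[simp] lemma reverse_flow (t : ℝ) (b : B) : Φ.reverse.flow t b = Φ.flow (-t) b := rfl

lemma reverse_stable (b : B) : Φ.reverse.stable b = Φ.unstable b := rfl

lemma reverse_unstable (b : B) : Φ.reverse.unstable b = Φ.stable b := by
  ext v
  simp [mem_stable, mem_unstable]

lemma IsQuasiHyperbolic.reverse {Φ : LinearCocycle B E} (hqh : Φ.IsQuasiHyperbolic) :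
    Φ.reverse.IsQuasiHyperbolic := fun b v hv C => by
  obtain ⟨t, ht⟩ := hqh b v hv C
  exact ⟨-t, by simpa using ht⟩

lemma IsMinimalSet.of_reverse {Φ : LinearCocycle B E} {S : Set B}
    (h : Φ.reverse.IsMinimalSet S) : Φ.IsMinimalSet S := by
  obtain ⟨hne, hcl, hinv, hmin⟩ := h
  exact ⟨hne, hcl, fun t x hx => by simpa using hinv (-t) x hx,
    fun S' hS' hne' hcl' hinv' => hmin S' hS' hne' hcl' fun t x hx => hinv' (-t) x hx⟩

lemma P_mem_stable {b : B} {v : E} (hv : v ∈ Φ.stable b) (t : ℝ) :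
    Φ.P t b v ∈ Φ.stable (Φ.flow t b) := by
  obtain ⟨C, hC⟩ := hv
  obtain ⟨M, hM⟩ := (isCompact_Icc (a := t) (b := 0)).exists_bound_of_continuousOn
    (Φ.continuous_P_apply_time b v).continuousOn
  refine ⟨max C M, fun s hs => ?_⟩
  rw [P_P_apply]
  rcases lt_or_ge 0 (s + t) with h | h
  · exact (hC _ h).trans (le_max_left _ _)
  · exact (hM _ ⟨by linarith, h⟩).trans (le_max_right _ _)

lemma P_mem_unstable {b : B} {v : E} (hv : v ∈ Φ.unstable b) (t : ℝ) :
    Φ.P t b v ∈ Φ.unstable (Φ.flow t b) := by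
  simpa [reverse_stable] using Φ.reverse.P_mem_stable hv (-t)

lemma map_P_eq_of_forall_P_mem {S : B → Submodule ℝ E}
    (hS : ∀ t b, ∀ v ∈ S b, Φ.P t b v ∈ S (Φ.flow t b)) (t : ℝ) (b : B) :
    (S b).map (Φ.P t b : E →ₗ[ℝ] E) = S (Φ.flow t b) := by
  refine le_antisymm (Submodule.map_le_iff_le_comap.2 fun v hv => hS t b v hv) fun w hw => ?_
  refine ⟨Φ.P (-t) (Φ.flow t b) w, ?_, Φ.P_P_neg_apply t b w⟩
  simpa [flow_neg_flow] using hS (-t) _ w hw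

lemma map_stable (t : ℝ) (b : B) :
    (Φ.stable b).map (Φ.P t b : E →ₗ[ℝ] E) = Φ.stable (Φ.flow t b) :=
  Φ.map_P_eq_of_forall_P_mem (S := Φ.stable) (fun t _ _ hv => Φ.P_mem_stable hv t) t b

lemma map_unstable (t : ℝ) (b : B) :
    (Φ.unstable b).map (Φ.P t b : E →ₗ[ℝ] E) = Φ.unstable (Φ.flow t b) :=
  Φ.map_P_eq_of_forall_P_mem (S := Φ.unstable) (fun t _ _ hv => Φ.P_mem_unstable hv t) t b

lemma IsQuasiHyperbolic.eq_zero_of_norm_P_le {Φ : LinearCocycle B E}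
    (hqh : Φ.IsQuasiHyperbolic) {b : B} {v : E} {C : ℝ} (h : ∀ t, ‖Φ.P t b v‖ ≤ C) : v = 0 := by
  by_contra hv
  obtain ⟨t, ht⟩ := hqh b v hv C
  exact (h t).not_gt ht

lemma disjoint_stable_unstable (hqh : Φ.IsQuasiHyperbolic) (b : B) :
    Disjoint (Φ.stable b) (Φ.unstable b) := by
  refine Submodule.disjoint_def.2 fun v ⟨C₁, hC₁⟩ ⟨C₂, hC₂⟩ =>
    hqh.eq_zero_of_norm_P_le (b := b) (C := max (max C₁ C₂) ‖v‖) fun t => ?_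
  rcases lt_trichotomy t 0 with h | rfl | h
  · simpa using (hC₂ (-t) (neg_pos.2 h)).trans ((le_max_right _ _).trans (le_max_left _ _))
  · simp [P_zero_apply]
  · exact (hC₁ t h).trans ((le_max_left _ _).trans (le_max_left _ _))

variable [CompactSpace B]

lemma exists_norm_P_le (r : ℝ) : ∃ L, ∀ t, |t| ≤ r → ∀ b v, ‖Φ.P t b v‖ ≤ L * ‖v‖ := by
  obtain ⟨L, hL⟩ := (isCompact_Icc.prod isCompact_univ).exists_bound_of_continuousOn
    Φ.P_cont.continuousOn (s := Icc (-r) r ×ˢ (univ : Set B))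
  exact ⟨L, fun t ht b v => ((Φ.P t b).le_opNorm v).trans <|
    mul_le_mul_of_nonneg_right (hL (t, b) ⟨abs_le.1 ht, trivial⟩) (norm_nonneg v)⟩

lemma exists_isMinimalSet_subset {Ω : Set B} (hne : Ω.Nonempty) (hcl : IsClosed Ω)
    (hinv : ∀ t : ℝ, ∀ x ∈ Ω, Φ.flow t x ∈ Ω) : ∃ S, Φ.IsMinimalSet S ∧ S ⊆ Ω := by
  let 𝒮 : Set (Set B) :=
    {C | C.Nonempty ∧ IsClosed C ∧ (∀ t : ℝ, ∀ x ∈ C, Φ.flow t x ∈ C) ∧ C ⊆ Ω}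
  have hchain : ∀ c ⊆ 𝒮, IsChain (· ⊆ ·) c → c.Nonempty → ∃ lb ∈ 𝒮, ∀ C ∈ c, lb ⊆ C := by
    rintro c hc hchain ⟨C₀, hC₀⟩
    have : Nonempty c := ⟨⟨C₀, hC₀⟩⟩
    refine ⟨⋂₀ c, ⟨?_, isClosed_sInter fun C hC => (hc hC).2.1,
      fun t x hx => mem_sInter.2 fun C hC => (hc hC).2.2.1 t x (hx C hC),
      (sInter_subset_of_mem hC₀).trans (hc hC₀).2.2.2⟩, fun C hC => sInter_subset_of_mem hC⟩
    exact IsCompact.nonempty_sInter_of_directed_nonempty_isCompact_isClosed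
      (fun C hC C' hC' => (hchain.total hC hC').elim (fun h => ⟨C, hC, subset_rfl, h⟩)
        fun h => ⟨C', hC', h, subset_rfl⟩)
      (fun C hC => (hc hC).1) (fun C hC => (hc hC).2.1.isCompact) fun C hC => (hc hC).2.1
  obtain ⟨S, -, hS⟩ := zorn_superset_nonempty 𝒮 hchain Ω ⟨hne, hcl, hinv, subset_rfl⟩
  obtain ⟨hSne, hScl, hSinv, hSΩ⟩ := hS.prop
  exact ⟨S, ⟨hSne, hScl, hSinv, fun S' hS' hne' hcl' hinv' =>
    hS.eq_of_le ⟨hne', hcl', hinv', hS'.trans hSΩ⟩ hS'⟩, hSΩ⟩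

lemma exists_isMinimalSet_subset_omegaLimit (b : B) :
    ∃ S, Φ.IsMinimalSet S ∧ S ⊆ omegaLimit atTop Φ.flow {b} :=
  Φ.exists_isMinimalSet_subset (nonempty_omegaLimit _ _ _ (singleton_nonempty b))
    (isClosed_omegaLimit _ _ _) fun t _ hx =>
      Φ.baseFlow.isInvariant_omegaLimit atTop {b}
        (fun t => tendsto_atTop_add_const_left _ t tendsto_id) t hx

variable [FiniteDimensional ℝ E]

lemma IsQuasiHyperbolic.not_forall_eventually_norm_P_le {Φ : LinearCocycle B E}
    (hqh : Φ.IsQuasiHyperbolic) {ι : Type*} {l : Filter ι} [l.NeBot] (b : ι → B) (v : ι → E)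
    (hv : ∀ᶠ i in l, v i ≠ 0) (C : ℝ) :
    ¬ ∀ σ, ∀ᶠ i in l, ‖Φ.P σ (b i) (v i)‖ ≤ C * ‖v i‖ := by
  intro h
  let w i := ‖v i‖⁻¹ • v i
  have hw : ∀ᶠ i in l, (b i, w i) ∈ (univ : Set B) ×ˢ Metric.sphere (0 : E) 1 := by
    filter_upwards [hv] with i hi
    simp [w, norm_smul, hi]
  obtain ⟨⟨y, u⟩, ⟨-, hu⟩, hcl⟩ :=
    (isCompact_univ.prod (isCompact_sphere (0 : E) 1)).exists_mapClusterPt_of_frequently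
      hw.frequently
  obtain ⟨U, hUl, hU⟩ := mapClusterPt_iff_ultrafilter.1 hcl
  have hu0 : u ≠ 0 := by rintro rfl; simp at hu
  refine hu0 <| hqh.eq_zero_of_norm_P_le (b := y) (C := C) fun σ => ?_
  refine le_of_tendsto ((Φ.continuous_P_apply σ).norm.tendsto _ |>.comp hU) ?_
  filter_upwards [hUl (h σ), hUl hv] with i hi hi0
  simpa [w, norm_smul, inv_mul_le_iff₀ (norm_pos_iff.2 hi0), mul_comm] using hi

lemma exists_norm_P_le_mul_max (hqh : Φ.IsQuasiHyperbolic) :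
    ∃ D > 0, ∀ b v s t, 0 ≤ s → s ≤ t → ‖Φ.P s b v‖ ≤ D * max ‖v‖ ‖Φ.P t b v‖ := by
  by_contra! h
  choose b v s t hs hst hlt using fun n : ℕ => h (n + 1) n.cast_add_one_pos
  have hpeak : ∀ n, ∃ u ∈ Icc 0 (t n),
      IsMaxOn (fun x => ‖Φ.P x (b n) (v n)‖) (Icc 0 (t n)) u := fun n =>
    isCompact_Icc.exists_isMaxOn (nonempty_Icc.2 ((hs n).trans (hst n)))
      (Φ.continuous_P_apply_time (b n) (v n)).norm.continuousOn
  choose u hu hmax using hpeak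
  set m : ℕ → ℝ := fun n => max ‖v n‖ ‖Φ.P (t n) (b n) (v n)‖
  have hm0 : ∀ n, 0 ≤ m n := fun n => (norm_nonneg _).trans (le_max_left _ _)
  have hbig : ∀ n : ℕ, (n + 1) * m n < ‖Φ.P (u n) (b n) (v n)‖ :=
    fun n => (hlt n).trans_le (hmax n ⟨hs n, hst n⟩)
  -- the peak is far from both ends, since near them the orbit is at most `L * m n`
  have hfar : ∀ r, ∀ᶠ n : ℕ in atTop, r < u n ∧ r < t n - u n := by
    intro r
    obtain ⟨L, hL⟩ := Φ.exists_norm_P_le r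
    filter_upwards [tendsto_natCast_atTop_atTop.eventually_ge_atTop L] with n hn
    have hLm : ∀ x, 0 ≤ x → x ≤ m n → L * x ≤ (n + 1) * m n := fun x hx hxm => by
      nlinarith [hm0 n]
    constructor
    · by_contra! hr
      have := hL (u n) (abs_le.2 ⟨by linarith [(hu n).1], hr⟩) (b n) (v n)
      linarith [hbig n, hLm _ (norm_nonneg _) (le_max_left _ _)]
    · by_contra! hr
      have := hL (u n - t n) (abs_le.2 ⟨by linarith, by linarith [(hu n).2]⟩)
        (Φ.flow (t n) (b n)) (Φ.P (t n) (b n) (v n))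
      rw [P_P_apply, sub_add_cancel] at this
      linarith [hbig n, hLm _ (norm_nonneg _) (le_max_right _ _)]
  refine hqh.not_forall_eventually_norm_P_le (l := atTop) (fun n : ℕ => Φ.flow (u n) (b n))
    (fun n => Φ.P (u n) (b n) (v n)) (Eventually.of_forall fun n => ?_) 1 fun σ => ?_
  · exact norm_pos_iff.1 ((mul_nonneg n.cast_add_one_pos.le (hm0 n)).trans_lt (hbig n))
  · filter_upwards [hfar |σ|] with n hn
    rw [P_P_apply, one_mul]
    exact hmax n ⟨by linarith [neg_abs_le σ], by linarith [le_abs_self σ]⟩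

lemma tendsto_P_of_mem_stable (hqh : Φ.IsQuasiHyperbolic) {b : B} {v : E}
    (hv : v ∈ Φ.stable b) : Tendsto (fun t => Φ.P t b v) atTop (𝓝 0) := by
  obtain ⟨C, hC⟩ := hv
  rw [tendsto_zero_iff_norm_tendsto_zero]
  by_contra h
  obtain ⟨ε, hε, hfreq⟩ : ∃ ε > 0, ∃ᶠ t in atTop, ε ≤ ‖Φ.P t b v‖ := by
    simpa [Metric.tendsto_nhds, not_eventually, frequently_atTop] using h
  let l := atTop ⊓ 𝓟 {t | ε ≤ ‖Φ.P t b v‖}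
  have : l.NeBot := frequently_iff_neBot.1 hfreq
  have hl : ∀ᶠ t in l, ε ≤ ‖Φ.P t b v‖ := mem_inf_of_right (mem_principal_self _)
  have hC0 : 0 ≤ C := (norm_nonneg _).trans (hC 1 one_pos)
  refine hqh.not_forall_eventually_norm_P_le (l := l) (fun t => Φ.flow t b) (fun t => Φ.P t b v)
    (hl.mono fun t ht => norm_pos_iff.1 (hε.trans_le ht)) (C / ε) fun σ => ?_
  filter_upwards [hl, mem_inf_of_left (eventually_gt_atTop (-σ))] with t ht hσt
  rw [P_P_apply]
  calc ‖Φ.P (σ + t) b v‖ ≤ C := hC _ (by linarith)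
    _ = C / ε * ε := by field_simp
    _ ≤ C / ε * ‖Φ.P t b v‖ := by gcongr

lemma exists_norm_P_le_of_mem_stable (hqh : Φ.IsQuasiHyperbolic) :
    ∃ K > 0, ∀ b, ∀ v ∈ Φ.stable b, ∀ t ≥ 0, ‖Φ.P t b v‖ ≤ K * ‖v‖ := by
  obtain ⟨D, hD0, hD⟩ := Φ.exists_norm_P_le_mul_max hqh
  refine ⟨D, hD0, fun b v hv t ht => ?_⟩
  rcases eq_or_ne v 0 with rfl | hv0
  · simp
  obtain ⟨s, hts, hs⟩ := ((eventually_ge_atTop t).and <|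
    (tendsto_zero_iff_norm_tendsto_zero.1 (Φ.tendsto_P_of_mem_stable hqh hv)).eventually_lt_const
      (norm_pos_iff.2 hv0)).exists
  calc ‖Φ.P t b v‖ ≤ D * max ‖v‖ ‖Φ.P s b v‖ := hD b v t s ht hts
    _ = D * ‖v‖ := by rw [max_eq_left hs.le]

lemma eventually_norm_P_le_of_mem_stable (hqh : Φ.IsQuasiHyperbolic) {ε : ℝ} (hε : 0 < ε) :
    ∀ᶠ t in atTop, ∀ b, ∀ v ∈ Φ.stable b, ‖Φ.P t b v‖ ≤ ε * ‖v‖ := by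
  obtain ⟨K, hK0, hK⟩ := Φ.exists_norm_P_le_of_mem_stable hqh
  rw [eventually_atTop]
  by_contra! h
  choose t ht b v hv hlt using fun n : ℕ => h n
  refine hqh.not_forall_eventually_norm_P_le (l := atTop) (fun n : ℕ => Φ.flow (t n) (b n))
    (fun n => Φ.P (t n) (b n) (v n))
    (Eventually.of_forall fun n => norm_pos_iff.1 ((by positivity : 0 ≤ ε * ‖v n‖).trans_lt
      (hlt n))) (K / ε) fun σ => ?_
  filter_upwards [tendsto_natCast_atTop_atTop.eventually_ge_atTop (-σ)] with n hn
  rw [P_P_apply]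
  calc ‖Φ.P (σ + t n) (b n) (v n)‖ ≤ K * ‖v n‖ := hK _ _ (hv n) _ (by linarith [ht n])
    _ = K / ε * (ε * ‖v n‖) := by field_simp
    _ ≤ K / ε * ‖Φ.P (t n) (b n) (v n)‖ := by gcongr; exact (hlt n).le

lemma eventually_norm_P_neg_le_of_mem_unstable (hqh : Φ.IsQuasiHyperbolic) {ε : ℝ}
    (hε : 0 < ε) : ∀ᶠ t in atTop, ∀ b, ∀ v ∈ Φ.unstable b, ‖Φ.P (-t) b v‖ ≤ ε * ‖v‖ := by
  simpa [reverse_stable] using Φ.reverse.eventually_norm_P_le_of_mem_stable hqh.reverse hε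

lemma exists_norm_le_norm_P_of_disjoint (hqh : Φ.IsQuasiHyperbolic) {b : B}
    {W : Submodule ℝ E} (hW : Disjoint (Φ.stable b) W) :
    ∃ S : ℝ, ∀ τ ≥ S, ∀ v ∈ W, ‖v‖ ≤ ‖Φ.P τ b v‖ := by
  obtain ⟨D, hD0, hD⟩ := Φ.exists_norm_P_le_mul_max hqh
  let K := (W : Set E) ∩ Metric.sphere 0 1
  have hK : IsCompact K := (isCompact_sphere 0 1).inter_left W.closed_of_finiteDimensional
  let O : ℕ → Set E := fun n => ⋃ τ ∈ Icc (0 : ℝ) n, {u | D < ‖Φ.P τ b u‖}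
  have hKO : K ⊆ ⋃ n, O n := by
    rintro u ⟨huW, hu⟩
    have hus : u ∉ Φ.stable b := fun hus => by
      simp [Submodule.disjoint_def.1 hW u hus huW] at hu
    simp only [mem_stable, not_exists, not_forall, not_le] at hus
    obtain ⟨τ, hτ, hτD⟩ := hus D
    obtain ⟨n, hn⟩ := exists_nat_ge τ
    exact mem_iUnion.2 ⟨n, mem_biUnion ⟨hτ.le, hn⟩ hτD⟩
  obtain ⟨n, hn⟩ := hK.elim_directed_cover O
    (fun n => isOpen_biUnion fun τ _ => isOpen_lt continuous_const (Φ.P τ b).continuous.norm) hKO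
    (Monotone.directed_le fun m n hmn =>
      biUnion_subset_biUnion_left (Icc_subset_Icc_right (by exact_mod_cast hmn)))
  refine ⟨n, fun τ hτ v hv => ?_⟩
  rcases eq_or_ne v 0 with rfl | hv0
  · simp
  have hvpos := norm_pos_iff.2 hv0
  obtain ⟨s, hs, hsD⟩ := mem_iUnion₂.1 (hn ⟨W.smul_mem ‖v‖⁻¹ hv, by simp [norm_smul, hv0]⟩)
  -- a unit vector that has left the ball of radius `D` cannot come back to the unit ball
  have h1 : 1 < ‖Φ.P τ b (‖v‖⁻¹ • v)‖ := by
    have := (show D < ‖Φ.P s b (‖v‖⁻¹ • v)‖ from hsD).trans_le (hD b _ s τ hs.1 (hs.2.trans hτ))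
    rw [norm_smul, norm_inv, norm_norm, inv_mul_cancel₀ hvpos.ne', lt_mul_iff_one_lt_right hD0,
      lt_max_iff] at this
    exact this.resolve_left (lt_irrefl 1)
  rw [map_smul, norm_smul, norm_inv, norm_norm, ← div_eq_inv_mul, one_lt_div hvpos] at h1
  exact h1.le

lemma finrank_le_finrank_stable_add_finrank_unstable (hqh : Φ.IsQuasiHyperbolic) (b : B)
    {y : B} (hy : y ∈ omegaLimit atTop Φ.flow {b}) :
    finrank ℝ E ≤ finrank ℝ (Φ.stable b) + finrank ℝ (Φ.unstable y) := by
  obtain ⟨D, -, hD⟩ := Φ.exists_norm_P_le_mul_max hqh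
  obtain ⟨W, hW⟩ := (Φ.stable b).exists_isCompl
  obtain ⟨S, hS⟩ := Φ.exists_norm_le_norm_P_of_disjoint hqh hW.disjoint
  obtain ⟨U, hUt, hUy⟩ := mapClusterPt_iff_ultrafilter.1
    ((mem_omegaLimit_singleton_iff_mapClusterPt _ _ _ _).1 hy)
  obtain ⟨L, hLW, hL⟩ := exists_finrank_eq_forall_exists_tendsto U
    (fun τ => W.map (Φ.P τ b : E →ₗ[ℝ] E)) fun τ => (Φ.equivP τ b).finrank_map_eq W
  have hback : ∀ σ ≥ 0, ∀ τ ≥ max S σ, ∀ u ∈ W.map (Φ.P τ b : E →ₗ[ℝ] E),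
      ‖Φ.P (-σ) (Φ.flow τ b) u‖ ≤ D * ‖u‖ := by
    rintro σ hσ τ hτ _ ⟨v, hv, rfl⟩
    rw [ge_iff_le, max_le_iff] at hτ
    calc ‖Φ.P (-σ) (Φ.flow τ b) (Φ.P τ b v)‖ = ‖Φ.P (τ - σ) b v‖ := by
          rw [P_P_apply, neg_add_eq_sub]
      _ ≤ D * max ‖v‖ ‖Φ.P τ b v‖ := hD b v _ τ (by linarith) (by linarith)
      _ = D * ‖Φ.P τ b v‖ := by rw [max_eq_right (hS τ hτ.1 v hv)]
  have hLu : L ≤ Φ.unstable y := fun u hu => by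
    obtain ⟨g, hgW, hgu⟩ := hL u hu
    refine ⟨D * ‖u‖, fun σ hσ => le_of_tendsto_of_tendsto
      (((Φ.continuous_P_apply (-σ)).norm.tendsto (y, u)).comp (hUy.prodMk_nhds hgu))
      (hgu.norm.const_mul D) ?_⟩
    filter_upwards [hUt (eventually_ge_atTop (max S σ))] with τ hτ
    exact hback σ hσ.le τ hτ (g τ) (hgW τ)
  calc finrank ℝ E = finrank ℝ (Φ.stable b) + finrank ℝ W :=
        (Submodule.finrank_add_eq_of_isCompl hW).symm
    _ ≤ _ := by gcongr; exact hLW ▸ Submodule.finrank_mono hLu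

lemma isCompl_stable_unstable (hqh : Φ.IsQuasiHyperbolic) {k : ℕ}
    (hmin : ∀ S, Φ.IsMinimalSet S → ∀ x ∈ S, finrank ℝ (Φ.stable x) = k) (b : B) :
    IsCompl (Φ.stable b) (Φ.unstable b) := by
  obtain ⟨M, hM, hMω⟩ := Φ.exists_isMinimalSet_subset_omegaLimit b
  obtain ⟨y, hy⟩ := hM.1
  obtain ⟨M', hM', hM'ω⟩ := Φ.reverse.exists_isMinimalSet_subset_omegaLimit b
  obtain ⟨y', hy'⟩ := hM'.1
  have hfwd := Φ.finrank_le_finrank_stable_add_finrank_unstable hqh b (hMω hy)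
  have hbwd := Φ.reverse.finrank_le_finrank_stable_add_finrank_unstable hqh.reverse b (hM'ω hy')
  rw [reverse_stable, reverse_unstable, hmin M' hM'.of_reverse y' hy'] at hbwd
  have hy_sum := Submodule.finrank_add_finrank_le_of_disjoint (Φ.disjoint_stable_unstable hqh y)
  rw [hmin M hM y hy] at hy_sum
  exact (Submodule.isCompl_iff_disjoint _ _ (by omega)).2 (Φ.disjoint_stable_unstable hqh b)

end LinearCocycle

/-- If the dimension of the stable subspace of a quasi-hyperbolic continuous
linear cocycle over a compact base is constant on all minimal sets of the
base flow, then the cocycle is hyperbolic on the whole bundle. -/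
theorem quasi_hyperbolic_hyperbolic_of_const_dim_on_minimals
    [CompactSpace B] [FiniteDimensional ℝ E]
    (Φ : LinearCocycle B E) (hqh : Φ.IsQuasiHyperbolic)
    (k : ℕ)
    (hmin : ∀ S : Set B, Φ.IsMinimalSet S → ∀ x ∈ S,
      Module.finrank ℝ (Φ.stable x) = k) :
    Φ.IsHyperbolicOn Set.univ := by
  obtain ⟨T, hTs, hTu, hT⟩ := ((Φ.eventually_norm_P_le_of_mem_stable hqh (ε := 1 / 4)
    (by norm_num)).and ((Φ.eventually_norm_P_neg_le_of_mem_unstable hqh (ε := 1 / 4)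
    (by norm_num)).and (eventually_gt_atTop 0))).exists
  refine ⟨Φ.stable, Φ.unstable, fun t b _ => Φ.map_stable t b, fun t b _ => Φ.map_unstable t b,
    fun b _ => Φ.isCompl_stable_unstable hqh hmin b, T, hT,
    fun b _ => ⟨fun v hv hv0 => ?_, fun v hv hv0 => ?_⟩⟩
  · exact (hTs b v hv).trans_lt (by linarith [norm_pos_iff.2 hv0])
  · exact (hTu b v hv).trans_lt (by linarith [norm_pos_iff.2 hv0])
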